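/- For every weak composition a of length n, the fundamental slide polynomial satisfies 𝔉_a = Σ_b 𝔐_b, where the sum is over all weak compositions b of length n such that b strongly dominates a and flat(b) refines flat(a). -/

import Mathlib

open scoped Classical

namespace SlidePaper

/-- Sum of the first `i` entries of a weak composition of length `n`. -/
def psum {n : ℕ} (a : Fin n → ℕ) (i : ℕ) : ℕ :=
  ∑ j ∈ Finset.univ.filter (fun j : Fin n => (j : ℕ) < i), a j

/-- `b` dominates `a`: all partial sums of `b` are at least those of `a`. -/
def Dominates {n : ℕ} (b a : Fin n → ℕ) : Prop :=
  ∀ i : Fin (n + 1), psum a i ≤ psum b i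

/-- The flattening of a weak composition: the list of its nonzero entries in order. -/
def flat {n : ℕ} (a : Fin n → ℕ) : List ℕ :=
  (List.ofFn a).filter (fun x => x ≠ 0)

/-- `β` refines `α`: `β` splits into consecutive blocks with sums `α₁, α₂, …`. -/
def Refines (β α : List ℕ) : Prop :=
  ∃ L : List (List ℕ), L.flatten = β ∧ L.map List.sum = α

/-- All weak compositions of length `n` with entries at most `k`. -/
def wcFinset (n k : ℕ) : Finset (Fin n → ℕ) :=
  Fintype.piFinset fun _ => Finset.range (k + 1)

/-- The monomial slide polynomial `𝔐_a`. -/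
noncomputable def slideM {n : ℕ} (a : Fin n → ℕ) : MvPolynomial (Fin n) ℤ :=
  ∑ b ∈ (wcFinset n (∑ i, a i)).filter (fun b => Dominates b a ∧ flat b = flat a),
    MvPolynomial.monomial (Finsupp.equivFunOnFinite.symm b) 1

/-- The fundamental slide polynomial `𝔉_a`. -/
noncomputable def slideF {n : ℕ} (a : Fin n → ℕ) : MvPolynomial (Fin n) ℤ :=
  ∑ b ∈ (wcFinset n (∑ i, a i)).filter (fun b => Dominates b a ∧ Refines (flat b) (flat a)),
    MvPolynomial.monomial (Finsupp.equivFunOnFinite.symm b) 1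

/-- A weak composition is quasi-flat if its nonzero entries occupy consecutive positions. -/
def QuasiFlat {n : ℕ} (a : Fin n → ℕ) : Prop :=
  ∀ i j l : Fin n, i ≤ j → j ≤ l → a i ≠ 0 → a l ≠ 0 → a j ≠ 0

/-- `b` strongly dominates `a`. -/
def StronglyDominates {n : ℕ} (b a : Fin n → ℕ) : Prop :=
  Dominates b a ∧ ∀ c : Fin n → ℕ, Dominates c a → flat c = flat b → Dominates c b

/-- The exponent vector placing the parts of `α` at the positions `i`. -/
noncomputable def placeExp {n : ℕ} (α : List ℕ) (i : Fin α.length → Fin n) : Fin n →₀ ℕ :=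
  ∑ t : Fin α.length, Finsupp.single (i t) (α.get t)

/-- `f` is quasisymmetric in the variables `x_1, …, x_k` (0-indexed: `x_0, …, x_{k-1}`). -/
def IsQuasisymmetricIn {n : ℕ} (k : ℕ) (f : MvPolynomial (Fin n) ℤ) : Prop :=
  ∀ α : List ℕ, (∀ x ∈ α, 0 < x) →
    ∀ i j : Fin α.length → Fin n, StrictMono i → StrictMono j →
      (∀ t, (i t : ℕ) < k) → (∀ t, (j t : ℕ) < k) →
      MvPolynomial.coeff (placeExp α i) f = MvPolynomial.coeff (placeExp α j) f

/-- The monomial quasisymmetric polynomial `M_α(x_1, …, x_k)` inside `ℤ[x_1, …, x_n]`. -/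
noncomputable def Mqs (n k : ℕ) (α : List ℕ) : MvPolynomial (Fin n) ℤ :=
  ∑ i ∈ (Finset.univ : Finset (Fin α.length → Fin n)).filter
      (fun i : Fin α.length → Fin n => StrictMono i ∧ ∀ t, (i t : ℕ) < k),
    ∏ t : Fin α.length, (MvPolynomial.X (i t) : MvPolynomial (Fin n) ℤ) ^ α.get t

/-- The fundamental quasisymmetric polynomial `F_α(x_1, …, x_k)` inside `ℤ[x_1, …, x_n]`. -/
noncomputable def Fqs (n k : ℕ) (α : List ℕ) : MvPolynomial (Fin n) ℤ :=
  ∑ c ∈ (Finset.univ : Finset (Composition α.sum)).filter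
      (fun c => Refines c.blocks α ∧ c.blocks.length ≤ k),
    Mqs n k c.blocks

/-- Place the weak composition `a` (of length `N`) at offset `k` inside length `M`. -/
def shiftComp {N : ℕ} (k M : ℕ) (a : Fin N → ℕ) : Fin M → ℕ :=
  fun i => if h : k ≤ (i : ℕ) ∧ (i : ℕ) - k < N then a ⟨(i : ℕ) - k, h.2⟩ else 0

/-- Spread the values `g` to positions `ι` inside a weak composition of length `n`. -/
def spread {l n : ℕ} (ι : Fin l → Fin n) (g : Fin l → ℕ) : Fin n → ℕ :=
  fun i => ∑ k, if ι k = i then g k else 0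

/-- The monomial quasisymmetric function `M_α` in infinitely many variables. -/
noncomputable def MqsFun (α : List ℕ) : MvPowerSeries ℕ ℤ :=
  fun d => if ∃ i : Fin α.length → ℕ, StrictMono i ∧
      d = ∑ t : Fin α.length, Finsupp.single (i t) (α.get t) then 1 else 0

/-- The fundamental quasisymmetric function `F_α` in infinitely many variables. -/
noncomputable def FqsFun (α : List ℕ) : MvPowerSeries ℕ ℤ :=
  ∑ c ∈ (Finset.univ : Finset (Composition α.sum)).filter (fun c => Refines c.blocks α),
    MqsFun c.blocks

/-- The cells of the Young diagram of `lam` (French notation): row `r` (from the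
bottom, 0-indexed) has `lam.get r` cells. -/
abbrev Cells (lam : List ℕ) := Σ r : Fin lam.length, Fin (lam.get r)

/-- A filling of `lam` with entries in `{1, …, n}` (encoded as `Fin n`) is a semistandard
Young tableau: rows weakly increase left to right, columns strictly increase bottom to top. -/
def IsSSYT {n : ℕ} {lam : List ℕ} (T : Cells lam → Fin n) : Prop :=
  (∀ (r : Fin lam.length) (c c' : Fin (lam.get r)), c ≤ c' → T ⟨r, c⟩ ≤ T ⟨r, c'⟩) ∧
  (∀ (r r' : Fin lam.length) (c' : Fin (lam.get r')) (h : (c' : ℕ) < lam.get r),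
      (r : ℕ) < (r' : ℕ) → T ⟨r, ⟨c', h⟩⟩ < T ⟨r', c'⟩)

/-- The weight of a filling: the `v`-th entry counts the occurrences of the value `v`. -/
def wtT {n : ℕ} {lam : List ℕ} (T : Cells lam → Fin n) : Fin n → ℕ :=
  fun v => (Finset.univ.filter (fun x : Cells lam => T x = v)).card

/-- A filling is quasi-Yamanouchi if for every value `v > 1`, the leftmost occurrence of `v`
lies weakly left of some occurrence of `v - 1`. -/
def IsQY {n : ℕ} {lam : List ℕ} (T : Cells lam → Fin n) : Prop :=
  ∀ (v : Fin n) (x : Cells lam), T x = v → 0 < (v : ℕ) →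
    (∀ y : Cells lam, T y = v → (x.2 : ℕ) ≤ (y.2 : ℕ)) →
    ∃ z : Cells lam, (T z : ℕ) + 1 = (v : ℕ) ∧ (x.2 : ℕ) ≤ (z.2 : ℕ)

/-- The Schur polynomial `s_lam(x_1, …, x_n)` as the generating function of
semistandard Young tableaux. -/
noncomputable def schurPoly (n : ℕ) (lam : List ℕ) : MvPolynomial (Fin n) ℤ :=
  ∑ T ∈ (Finset.univ : Finset (Cells lam → Fin n)).filter (fun T => IsSSYT T),
    MvPolynomial.monomial (Finsupp.equivFunOnFinite.symm (wtT T)) 1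

/-- One destandardization step on fillings: for some value `v` occurring in `T` whose
leftmost occurrence is strictly right of every occurrence of `v - 1`, every `v` is
decremented to `v - 1`. -/
def TabStep {n : ℕ} {lam : List ℕ} (T T' : Cells lam → Fin n) : Prop :=
  ∃ v : Fin n, 0 < (v : ℕ) ∧ (∃ x, T x = v) ∧
    (∀ x y : Cells lam, T x = v → (T y : ℕ) + 1 = (v : ℕ) → (y.2 : ℕ) < (x.2 : ℕ)) ∧
    ∀ x : Cells lam, (T' x : ℕ) = if T x = v then (v : ℕ) - 1 else (T x : ℕ)

/-- The reading word of a set of crosses: rows are read from top to bottom, each row from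
left to right, the cross in (0-indexed) row `i` and column `j` recording the letter `i + j`
(representing the simple transposition swapping `i + j` and `i + j + 1` of `{0, 1, 2, …}`). -/
def readWord (P : Finset (ℕ × ℕ)) : List ℕ :=
  ((List.range (P.sup Prod.fst + 1)).reverse).flatMap
    (fun i => ((List.range (P.sup Prod.snd + 1)).filter (fun j => decide ((i, j) ∈ P))).map
      (fun j => i + j))

/-- The permutation `s_{i_ℓ} ⋯ s_{i_1}` associated to the word `(i_1, …, i_ℓ)`,
where `s_k` swaps `k` and `k + 1`. -/
def wordPerm (l : List ℕ) : Equiv.Perm ℕ :=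
  ((l.map (fun k => Equiv.swap k (k + 1))).reverse).prod

/-- A word is reduced if no shorter word has the same product. -/
def IsReducedWord (l : List ℕ) : Prop :=
  ∀ l' : List ℕ, wordPerm l' = wordPerm l → l.length ≤ l'.length

/-- `P` is a reduced pipe dream of shape `w`: the pipes trace out `w` and no two pipes
cross more than once, equivalently the reading word of `P` is a reduced word for `w`. -/
def IsPD (w : Equiv.Perm ℕ) (P : Finset (ℕ × ℕ)) : Prop :=
  wordPerm (readWord P) = w ∧ IsReducedWord (readWord P)

/-- `P` is a quasi-Yamanouchi pipe dream of shape `w`: for every row, the westernmost cross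
is in the first column or lies weakly west of some cross in the row above. -/
def IsQPD (w : Equiv.Perm ℕ) (P : Finset (ℕ × ℕ)) : Prop :=
  IsPD w P ∧ ∀ i j : ℕ, (i, j) ∈ P → (∀ j', (i, j') ∈ P → j ≤ j') →
    (j = 0 ∨ ∃ j', (i + 1, j') ∈ P ∧ j ≤ j')

/-- One destandardization step on pipe dreams: a row with no cross in the first column,
all of whose crosses lie strictly east of every cross in the row above, has all its
crosses moved one step northwest. -/
def PDStep (P P' : Finset (ℕ × ℕ)) : Prop :=
  ∃ r : ℕ, (∃ j, (r, j) ∈ P) ∧ (r, 0) ∉ P ∧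
    (∀ j j', (r, j) ∈ P → (r + 1, j') ∈ P → j' < j) ∧
    P' = P.filter (fun p => p.1 ≠ r) ∪
      (P.filter (fun p => p.1 = r)).image (fun p => (r + 1, p.2 - 1))

/-- The number of crosses of `P` in (0-indexed) row `i`. -/
def rowWt (P : Finset (ℕ × ℕ)) (i : ℕ) : ℕ := (P.filter (fun p => p.1 = i)).card

/-- The weight of a pipe dream, as a weak composition of length `n`. -/
def wtFin (n : ℕ) (P : Finset (ℕ × ℕ)) : Fin n → ℕ := fun i => rowWt P (i : ℕ)

/-- The flattened weight of a pipe dream: the list of nonzero row counts, bottom row first. -/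
def flatWt (P : Finset (ℕ × ℕ)) : List ℕ :=
  ((List.range (P.sup Prod.fst + 1)).map (rowWt P)).filter (fun x => x ≠ 0)

/-- The Schubert polynomial of `w` in the variables `x_1, …, x_n`, as the generating
function of reduced pipe dreams of shape `w`. -/
noncomputable def SchubertPoly (n : ℕ) (w : Equiv.Perm ℕ) : MvPolynomial (Fin n) ℤ :=
  ∑ᶠ P ∈ {P : Finset (ℕ × ℕ) | IsPD w P},
    MvPolynomial.monomial (Finsupp.equivFunOnFinite.symm (wtFin n P)) 1

/-- The Lehmer code of `w` (0-indexed): `lehmer w i` counts `j > i` with `w j < w i`. -/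
noncomputable def lehmer (w : Equiv.Perm ℕ) (i : ℕ) : ℕ :=
  Set.ncard {j : ℕ | i < j ∧ w j < w i}

/-- The Lehmer code of `w` as a weak composition of length `n`. -/
noncomputable def lehmerFin (n : ℕ) (w : Equiv.Perm ℕ) : Fin n → ℕ :=
  fun i => lehmer w (i : ℕ)

/-- The number of inversions of `w`. -/
noncomputable def invCount (w : Equiv.Perm ℕ) : ℕ :=
  Set.ncard {p : ℕ × ℕ | p.1 < p.2 ∧ w p.2 < w p.1}

/-- The largest entry of the Lehmer code of `w`. -/
noncomputable def maxLehmer (w : Equiv.Perm ℕ) : ℕ :=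
  sSup (Set.range (lehmer w))

/-- The (0-indexed) position of the first descent of `w`. -/
noncomputable def firstDescent (w : Equiv.Perm ℕ) : ℕ :=
  sInf {i : ℕ | w (i + 1) < w i}

/-- `δ(w) = 1` if every position attaining `max(L(w))` is at or before the first descent,
and `δ(w) = 0` otherwise. -/
noncomputable def delta (w : Equiv.Perm ℕ) : ℤ :=
  if ∀ i : ℕ, lehmer w i = maxLehmer w → i ≤ firstDescent w then 1 else 0

/-- `η(w) = inv(w) − max(L(w)) + δ(w) − min{i : w_i > w_{i+1}}`. -/
noncomputable def eta (w : Equiv.Perm ℕ) : ℤ :=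
  (invCount w : ℤ) - (maxLehmer w : ℤ) + delta w - ((firstDescent w : ℤ) + 1)

/-- The decomposition of a list into maximal strictly increasing runs. -/
def runsStrict : List ℕ → List (List ℕ)
  | [] => []
  | x :: rest =>
    match runsStrict rest, rest with
    | r :: rs, y :: _ => if x < y then (x :: r) :: rs else [x] :: r :: rs
    | _, _ => [[x]]

/-- The descent composition of a word: lengths of its maximal increasing runs, a new run
beginning whenever a letter is followed by a weakly smaller letter. -/
def desStrict (l : List ℕ) : List ℕ := (runsStrict l).map List.length

/-- The decomposition of a list into maximal weakly increasing runs. -/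
def runsWeak : List ℕ → List (List ℕ)
  | [] => []
  | x :: rest =>
    match runsWeak rest, rest with
    | r :: rs, y :: _ => if x ≤ y then (x :: r) :: rs else [x] :: r :: rs
    | _, _ => [[x]]

/-- The descent composition of a word: the lengths of its maximal weakly increasing runs. -/
def desComp (l : List ℕ) : List ℕ := (runsWeak l).map List.length

/-- The permutation `1^m × w`, fixing `0, …, m-1` and acting by `w` shifted by `m` above. -/
def shiftPerm (m : ℕ) (w : Equiv.Perm ℕ) : Equiv.Perm ℕ where
  toFun i := if i < m then i else w (i - m) + m
  invFun i := if i < m then i else w.symm (i - m) + m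
  left_inv i := by
    dsimp only
    by_cases h : i < m
    · simp [h]
    · have h2 : ¬ (w (i - m) + m < m) := by omega
      rw [if_neg h, if_neg h2, Nat.add_sub_cancel, Equiv.symm_apply_apply]
      omega
  right_inv i := by
    dsimp only
    by_cases h : i < m
    · simp [h]
    · have h2 : ¬ (w.symm (i - m) + m < m) := by omega
      rw [if_neg h, if_neg h2, Nat.add_sub_cancel, Equiv.apply_symm_apply]
      omega

/-- The quasi-shuffle product of two (strong) compositions, as a multiset of compositions. -/
def qShuffle : List ℕ → List ℕ → Multiset (List ℕ)
  | [], β => {β}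
  | α, [] => {α}
  | a :: α, b :: β =>
      ((qShuffle α (b :: β)).map (a :: ·)) + ((qShuffle (a :: α) β).map (b :: ·)) +
        ((qShuffle α β).map ((a + b) :: ·))
termination_by α β => α.length + β.length
decreasing_by all_goals (simp only [List.length_cons]; omega)

def shuffles : List ℕ → List ℕ → Multiset (List ℕ)
  | [], B => {B}
  | A, [] => {A}
  | x :: A, y :: B =>
      ((shuffles A (y :: B)).map (x :: ·)) + ((shuffles (x :: A) B).map (y :: ·))
termination_by A B => A.length + B.length
decreasing_by all_goals (simp only [List.length_cons]; omega)

/-- The word `(2n-1)^{a_1} (2n-3)^{a_2} ⋯ 1^{a_n}` associated to a weak composition `a`. -/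
def wordA {n : ℕ} (a : Fin n → ℕ) : List ℕ :=
  (List.ofFn (fun i : Fin n => List.replicate (a i) (2 * n - 2 * (i : ℕ) - 1))).flatten

/-- The word `(2n)^{b_1} (2n-2)^{b_2} ⋯ 2^{b_n}` associated to a weak composition `b`. -/
def wordB {n : ℕ} (b : Fin n → ℕ) : List ℕ :=
  (List.ofFn (fun i : Fin n => List.replicate (b i) (2 * n - 2 * (i : ℕ)))).flatten

/-- A list (padded with trailing zeros) dominates a weak composition of length `n`. -/
def DominatesList {n : ℕ} (l : List ℕ) (a : Fin n → ℕ) : Prop :=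
  ∀ i : Fin (n + 1), psum a (i : ℕ) ≤ ((l.take (i : ℕ)).sum)

/-- The number of letters of the `A`-word (the odd letters) in the `k`-th weakly
increasing run of `C`. -/
def runCountA (C : List ℕ) (k : Fin (runsWeak C).length) : ℕ :=
  (((runsWeak C).get k).filter (fun z => z % 2 = 1)).length

/-- The number of letters of the `B`-word (the even letters) in the `k`-th weakly
increasing run of `C`. -/
def runCountB (C : List ℕ) (k : Fin (runsWeak C).length) : ℕ :=
  (((runsWeak C).get k).filter (fun z => z % 2 = 0)).length

/-- The length of the `k`-th weakly increasing run of `C`. -/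
def runLen (C : List ℕ) (k : Fin (runsWeak C).length) : ℕ :=
  ((runsWeak C).get k).length

/-- `c = bump_{(a,b)}(C)`: the unique weak composition of length `n` obtained by inserting
zero parts into `Des(C)` so that the correspondingly placed `Des_A` and `Des_B` dominate
`a` and `b`, minimal in dominance order among all such insertions. -/
def IsBumpS {n : ℕ} (a b : Fin n → ℕ) (C : List ℕ) (c : Fin n → ℕ) : Prop :=
  ∃ ι : Fin (runsWeak C).length → Fin n, StrictMono ι ∧
    c = spread ι (runLen C) ∧
    Dominates (spread ι (runCountA C)) a ∧ Dominates (spread ι (runCountB C)) b ∧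
    ∀ ι' : Fin (runsWeak C).length → Fin n, StrictMono ι' →
      Dominates (spread ι' (runCountA C)) a → Dominates (spread ι' (runCountB C)) b →
      Dominates (spread ι' (runLen C)) c

/-- The multiplicity `[c ∣ a ⧢ b]` of `c` in the slide product of `a` and `b`: the number of
shuffles `C` of the words of `a` and `b` lying in the shuffle set `SS(a,b)` with
`bump_{(a,b)}(C) = c`. -/
noncomputable def slideMult {n : ℕ} (a b c : Fin n → ℕ) : ℕ :=
  Multiset.card ((shuffles (wordA a) (wordB b)).filter
    (fun C => DominatesList ((runsWeak C).map
        (fun r => (r.filter (fun z => z % 2 = 1)).length)) a ∧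
      DominatesList ((runsWeak C).map (fun r => (r.filter (fun z => z % 2 = 0)).length)) b ∧
      IsBumpS a b C c))

/-- Membership in the quasi-shuffle set `QSS(a,b)`: a pair `(γ_a, γ_b)` of weak compositions
of a common length at most `n` with `γ_a ≥ a`, `flat(γ_a) = flat(a)`, `γ_b ≥ b`,
`flat(γ_b) = flat(b)` (after padding with trailing zeros), and all entries of
`γ_a + γ_b` positive. -/
def InQSS {n : ℕ} (a b : Fin n → ℕ) (x : (l : ℕ) × (Fin l → ℕ) × (Fin l → ℕ)) : Prop :=
  x.1 ≤ n ∧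
  Dominates (shiftComp 0 n x.2.1) a ∧ flat x.2.1 = flat a ∧
  Dominates (shiftComp 0 n x.2.2) b ∧ flat x.2.2 = flat b ∧
  ∀ k : Fin x.1, 0 < x.2.1 k + x.2.2 k

/-- `c = bump_{(a,b)}(γ_a, γ_b)`: the unique weak composition `c` of length `n` with
`flat(c) = γ_a + γ_b` whose decomposition `c = c_a + c_b` satisfies `c_a ≥ a` and
`c_b ≥ b`, minimal in dominance order among all such compositions. -/
def IsBumpQ {n : ℕ} (a b : Fin n → ℕ) (x : (l : ℕ) × (Fin l → ℕ) × (Fin l → ℕ))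
    (c : Fin n → ℕ) : Prop :=
  ∃ ι : Fin x.1 → Fin n, StrictMono ι ∧
    c = spread ι (fun k => x.2.1 k + x.2.2 k) ∧
    Dominates (spread ι x.2.1) a ∧ Dominates (spread ι x.2.2) b ∧
    ∀ ι' : Fin x.1 → Fin n, StrictMono ι' →
      Dominates (spread ι' x.2.1) a → Dominates (spread ι' x.2.2) b →
      Dominates (spread ι' (fun k => x.2.1 k + x.2.2 k)) c

/-- The multiplicity `[c ∣ a ⧻ b]` of `c` in the quasi-slide product of `a` and `b`: the
number of pairs in the quasi-shuffle set `QSS(a,b)` whose bump is `c`. -/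
noncomputable def qsMult {n : ℕ} (a b c : Fin n → ℕ) : ℕ :=
  Nat.card {x : (l : ℕ) × (Fin l → ℕ) × (Fin l → ℕ) // InQSS a b x ∧ IsBumpQ a b x c}

/-- The Stanley symmetric function `S_w`. -/
noncomputable def StanleySym (w : Equiv.Perm ℕ) : MvPowerSeries ℕ ℤ :=
  ∑ᶠ l ∈ {l : List ℕ | wordPerm l = w ∧ IsReducedWord l}, FqsFun (desStrict l)
/-!
Fix a flattening `β`. The weak compositions `d` with `flat d = β` are the placements
`spread ι β.get` of the parts of `β` at strictly increasing positions `ι`, and placing at the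
pointwise maximum `ι ⊔ κ` takes the minimum of the partial sums. Hence the position maps of the
compositions dominating `a` are closed under `⊔`, and their supremum gives the least
composition with flattening `β` that dominates `a`; it strongly dominates `a`. Sending each
`c` in the support of `𝔉_a` to this least composition `b` partitions that support into the
supports of the `𝔐_b` with `b ⊵ a` and `flat b` refining `flat a`.
-/

open Finset

section

variable {n : ℕ}

lemma sum_flat (a : Fin n → ℕ) : (flat a).sum = ∑ i, a i := by
  rw [flat, ← List.sum_ofFn]
  induction List.ofFn a with
  | nil => rfl
  | cons x l ih => by_cases hx : x = 0 <;> simp_all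

lemma ne_zero_of_mem_flat {a : Fin n → ℕ} {x : ℕ} (hx : x ∈ flat a) : x ≠ 0 := by
  simpa [flat] using (List.mem_filter.1 hx).2

lemma Refines.sum_eq {β α : List ℕ} (h : Refines β α) : β.sum = α.sum := by
  obtain ⟨L, rfl, rfl⟩ := h
  exact List.sum_flatten

lemma sum_eq_of_flat_eq {b c : Fin n → ℕ} (h : flat b = flat c) : ∑ i, b i = ∑ i, c i := by
  rw [← sum_flat, h, sum_flat]

lemma sum_eq_of_refines {b a : Fin n → ℕ} (h : Refines (flat b) (flat a)) :
    ∑ i, b i = ∑ i, a i := by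
  rw [← sum_flat, h.sum_eq, sum_flat]

lemma mem_wcFinset_of_sum_eq {k : ℕ} {d : Fin n → ℕ} (h : ∑ i, d i = k) : d ∈ wcFinset n k :=
  Fintype.mem_piFinset.2 fun i =>
    mem_range.2 (Nat.lt_succ_of_le (h ▸ single_le_sum (fun _ _ => Nat.zero_le _) (mem_univ i)))

lemma psum_succ (a : Fin n → ℕ) (i : Fin n) : psum a (i + 1) = psum a i + a i := by
  have hset : univ.filter (fun j : Fin n => (j : ℕ) < i + 1)
      = insert i (univ.filter fun j : Fin n => (j : ℕ) < i) := by
    ext j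
    simp only [mem_filter, mem_univ, true_and, mem_insert, Fin.ext_iff]
    omega
  rw [psum, hset, sum_insert (by simp), psum, add_comm]

lemma Dominates.trans {a b c : Fin n → ℕ} (hcb : Dominates c b) (hba : Dominates b a) :
    Dominates c a :=
  fun i => (hba i).trans (hcb i)

lemma Dominates.antisymm {b c : Fin n → ℕ} (hbc : Dominates b c) (hcb : Dominates c b) :
    b = c := by
  have hpsum (i : ℕ) (hi : i ≤ n) : psum b i = psum c i :=
    le_antisymm (hcb ⟨i, by omega⟩) (hbc ⟨i, by omega⟩)
  funext i
  have hb := psum_succ b i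
  rw [hpsum _ i.isLt, hpsum _ i.isLt.le, psum_succ c i] at hb
  omega

lemma spread_apply_self {m : ℕ} {ι : Fin m → Fin n} (hι : Function.Injective ι)
    (g : Fin m → ℕ) (t : Fin m) : spread ι g (ι t) = g t := by
  simp [spread, hι.eq_iff]

lemma spread_eq_zero {m : ℕ} {ι : Fin m → Fin n} (g : Fin m → ℕ) {i : Fin n}
    (hi : ∀ t, ι t ≠ i) : spread ι g i = 0 :=
  sum_eq_zero fun t _ => if_neg (hi t)

lemma psum_spread {m : ℕ} (ι : Fin m → Fin n) (g : Fin m → ℕ) (i : ℕ) :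
    psum (spread ι g) i = ∑ t ∈ univ.filter (fun t => (ι t : ℕ) < i), g t := by
  simp only [psum, spread]
  rw [sum_comm, sum_filter]
  refine sum_congr rfl fun t _ => ?_
  simp [sum_ite_eq]

lemma psum_spread_sup {m : ℕ} {ι κ : Fin m → Fin n} (hι : Monotone ι) (hκ : Monotone κ)
    (g : Fin m → ℕ) (i : ℕ) :
    psum (spread (ι ⊔ κ) g) i = min (psum (spread ι g) i) (psum (spread κ g) i) := by
  simp only [psum_spread]
  set A := univ.filter fun t => (ι t : ℕ) < i
  set B := univ.filter fun t => (κ t : ℕ) < i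
  have hAB : univ.filter (fun t => ((ι ⊔ κ) t : ℕ) < i) = A ∩ B := by
    ext t
    simp [A, B, Fin.coe_max]
  have hlower {μ : Fin m → Fin n} (hμ : Monotone μ) :
      IsLowerSet ((univ.filter fun t => (μ t : ℕ) < i : Finset _) : Set (Fin m)) :=
    fun s t hts hs => by
      simpa using lt_of_le_of_lt (Fin.le_iff_val_le_val.1 (hμ hts)) (by simpa using hs)
  rw [hAB]
  rcases (hlower hι).total (hlower hκ) with h | h
  · rw [inter_eq_left.2 (coe_subset.1 h), min_eq_left (sum_le_sum_of_subset (coe_subset.1 h))]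
  · rw [inter_eq_right.2 (coe_subset.1 h), min_eq_right (sum_le_sum_of_subset (coe_subset.1 h))]

lemma flat_spread {m : ℕ} {ι : Fin m → Fin n} (hι : StrictMono ι) {g : Fin m → ℕ}
    (hg : ∀ t, g t ≠ 0) : flat (spread ι g) = List.ofFn g := by
  have hsupp (i : Fin n) : spread ι g i ≠ 0 ↔ i ∈ List.ofFn ι := by
    rw [List.mem_ofFn]
    by_cases hi : i ∈ Set.range ι
    · obtain ⟨t, rfl⟩ := hi
      simp [spread_apply_self hι.injective, hg]
    · rw [spread_eq_zero g fun t ht => hi ⟨t, ht⟩]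
      simpa using hi
  have hpos : (List.finRange n).filter (fun i => spread ι g i ≠ 0) = List.ofFn ι :=
    (((List.sortedLT_finRange n).pairwise.filter _).sortedLT).eq_of_mem_iff hι.sortedLT_ofFn
      (by simp [hsupp])
  rw [flat, List.ofFn_eq_map, List.filter_map, Function.comp_def, hpos, List.map_ofFn]
  exact congrArg List.ofFn (funext (spread_apply_self hι.injective g))

lemma spread_orderEmbOfFin (b : Fin n → ℕ) {k : ℕ}
    (h : (univ.filter fun i => b i ≠ 0).card = k) :
    spread (orderEmbOfFin _ h) (b ∘ orderEmbOfFin _ h) = b := by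
  funext i
  by_cases hi : i ∈ Set.range (orderEmbOfFin _ h)
  · obtain ⟨t, rfl⟩ := hi
    exact spread_apply_self (orderEmbOfFin _ h).injective _ t
  · rw [spread_eq_zero _ fun t ht => hi ⟨t, ht⟩]
    rw [range_orderEmbOfFin, coe_filter] at hi
    simpa [eq_comm] using hi

lemma exists_spread_eq_of_flat_eq {b : Fin n → ℕ} {β : List ℕ} (h : flat b = β) :
    ∃ ι : Fin β.length → Fin n, StrictMono ι ∧ spread ι β.get = b := by
  set S := univ.filter fun i => b i ≠ 0
  have hflat {k : ℕ} (hk : S.card = k) : flat b = List.ofFn (b ∘ orderEmbOfFin S hk) := by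
    conv_lhs => rw [← spread_orderEmbOfFin b hk]
    exact flat_spread (orderEmbOfFin S hk).strictMono
      fun t => (mem_filter.1 (orderEmbOfFin_mem S hk t)).2
  have hk : S.card = β.length := by rw [← h, hflat rfl, List.length_ofFn]
  have hget : b ∘ orderEmbOfFin S hk = β.get :=
    List.ofFn_injective (by rw [← hflat hk, h, List.ofFn_get])
  exact ⟨orderEmbOfFin S hk, (orderEmbOfFin S hk).strictMono, hget ▸ spread_orderEmbOfFin b hk⟩

lemma exists_stronglyDominates {a c : Fin n → ℕ} (hc : Dominates c a) :
    ∃ b, StronglyDominates b a ∧ flat b = flat c ∧ Dominates c b := by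
  set β := flat c
  let Adm : Set (Fin β.length → Fin n) := {ι | StrictMono ι ∧ Dominates (spread ι β.get) a}
  have hsup : ∀ ι ∈ Adm, ∀ κ ∈ Adm, ι ⊔ κ ∈ Adm := fun ι hι κ hκ =>
    ⟨fun s t hst => max_lt_max (hι.1 hst) (hκ.1 hst), fun i => by
      rw [psum_spread_sup hι.1.monotone hκ.1.monotone]
      exact le_min (hι.2 i) (hκ.2 i)⟩
  obtain ⟨ι, hι, hιc⟩ := exists_spread_eq_of_flat_eq (rfl : flat c = β)
  have hne : (univ.filter (· ∈ Adm)).Nonempty := ⟨ι, mem_filter.2 ⟨mem_univ _, hι, hιc ▸ hc⟩⟩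
  set ι₀ := (univ.filter (· ∈ Adm)).sup' hne id
  have hι₀ : ι₀ ∈ Adm := sup'_mem Adm hsup _ hne id fun κ hκ => (mem_filter.1 hκ).2
  have hflat : flat (spread ι₀ β.get) = β :=
    (flat_spread hι₀.1 fun t => ne_zero_of_mem_flat (List.get_mem β t)).trans (List.ofFn_get β)
  have hleast (d : Fin n → ℕ) (hda : Dominates d a) (hd : flat d = β) :
      Dominates d (spread ι₀ β.get) := by
    obtain ⟨κ, hκ, rfl⟩ := exists_spread_eq_of_flat_eq hd
    have hκι₀ : κ ≤ ι₀ := le_sup' id (mem_filter.2 ⟨mem_univ _, hκ, hda⟩)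
    intro i
    calc psum (spread ι₀ β.get) i = psum (spread (ι₀ ⊔ κ) β.get) i := by
          rw [sup_eq_left.2 hκι₀]
      _ = min (psum (spread ι₀ β.get) i) (psum (spread κ β.get) i) :=
          psum_spread_sup hι₀.1.monotone hκ.monotone _ _
      _ ≤ psum (spread κ β.get) i := min_le_right _ _
  exact ⟨spread ι₀ β.get, ⟨hι₀.2, fun d hda hd => hleast d hda (hd.trans hflat)⟩, hflat,
    hleast c hc rfl⟩

lemma StronglyDominates.eq_of_flat_eq {a b c : Fin n → ℕ} (hb : StronglyDominates b a)
    (hc : StronglyDominates c a) (h : flat b = flat c) : b = c :=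
  (hc.2 b hb.1 h).antisymm (hb.2 c hc.1 h.symm)

end

/-- `𝔉_a = Σ_b 𝔐_b` over weak compositions `b` of length `n` strongly
dominating `a` with `flat(b)` refining `flat(a)`. -/
theorem fundamentalSlide_eq_sum_monomialSlide {n : ℕ} (a : Fin n → ℕ) :
    slideF a = ∑ b ∈ (wcFinset n (∑ i, a i)).filter
        (fun b => StronglyDominates b a ∧ Refines (flat b) (flat a)),
      slideM b := by
  set B := (wcFinset n (∑ i, a i)).filter
    (fun b => StronglyDominates b a ∧ Refines (flat b) (flat a))
  set fiber := fun b : Fin n → ℕ =>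
    (wcFinset n (∑ i, b i)).filter fun c => Dominates c b ∧ flat c = flat b
  have hpartition : (wcFinset n (∑ i, a i)).filter
      (fun c => Dominates c a ∧ Refines (flat c) (flat a)) = B.biUnion fiber := by
    ext c
    simp only [B, fiber, mem_biUnion, mem_filter]
    constructor
    · rintro ⟨-, hca, hc⟩
      obtain ⟨b, hb, hbc, hcb⟩ := exists_stronglyDominates hca
      refine ⟨b, ⟨mem_wcFinset_of_sum_eq (sum_eq_of_refines (hbc ▸ hc)), hb, hbc ▸ hc⟩,
        mem_wcFinset_of_sum_eq (sum_eq_of_flat_eq hbc.symm), hcb, hbc.symm⟩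
    · rintro ⟨b, ⟨-, hb, hba⟩, -, hcb, hcb'⟩
      exact ⟨mem_wcFinset_of_sum_eq (sum_eq_of_refines (hcb' ▸ hba)), hcb.trans hb.1,
        hcb' ▸ hba⟩
  have hdisj : (B : Set (Fin n → ℕ)).PairwiseDisjoint fiber := by
    intro b₁ hb₁ b₂ hb₂ hne
    refine disjoint_left.2 fun c hc₁ hc₂ => hne ?_
    exact (mem_filter.1 hb₁).2.1.eq_of_flat_eq (mem_filter.1 hb₂).2.1
      ((mem_filter.1 hc₁).2.2.symm.trans (mem_filter.1 hc₂).2.2)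
  rw [slideF, hpartition, sum_biUnion hdisj]
  rfl

end SlidePaper
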